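/- Let A be a C*-algebra and let a, b ∈ A be self-adjoint. If ρ(a,b) = 0 then a = b. -/

import Mathlib

/-!
Put `f z = exp (z • a) * exp (-(z • b))`. Since left and right multiplications commute,
`f z = exp (z • C_{a,b}) 1 = ∑ zⁿ / n! • C_{a,b}ⁿ(1)`, so `ρ(a,b) = 0` makes `f` an entire
function of exponential type zero: `‖f z‖ ≤ M_ε exp (ε ‖z‖)` for every `ε > 0`. On the imaginary
axis `f` is a product of two unitaries, so `‖f‖ ≤ 1` there. Phragmén–Lindelöf in both half-planes
gives `‖f‖ ≤ 1` everywhere, Liouville makes `f` constant, and so `a - b = f'(0) = 0`.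
-/

/-- The iterated commutator `C_{a,b}^n` applied to `1`, where `C_{a,b}(x) = a*x - x*b`. -/
noncomputable def citer {A : Type*} [Ring A] (a b : A) (n : ℕ) : A :=
  (fun x => a * x - x * b)^[n] 1

/-- `ρ(a,b) = limsup_n ‖C_{a,b}^n(1)‖^{1/n}`. -/
noncomputable def rho {A : Type*} [NormedRing A] (a b : A) : ℝ :=
  Filter.limsup (fun n : ℕ => ‖citer a b n‖ ^ ((n : ℝ)⁻¹)) Filter.atTop

open Filter NormedSpace Complex
open scoped Nat

section Sequences

variable {u : ℕ → ℝ}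

theorem isBoundedUnder_rpow_inv_of_le_mul_pow {C K : ℝ} (hu : ∀ n, 0 ≤ u n) (hK : 0 ≤ K)
    (h : ∀ n, u n ≤ C * K ^ n) :
    IsBoundedUnder (· ≤ ·) atTop fun n => u n ^ ((n : ℝ)⁻¹) := by
  refine isBoundedUnder_of_eventually_le (a := max 1 C * K) ?_
  filter_upwards [eventually_ne_atTop 0] with n hn
  have hC : C ≤ max 1 C ^ n := (le_max_right 1 C).trans (le_self_pow₀ (le_max_left 1 C) hn)
  have hle : u n ≤ (max 1 C * K) ^ n := calc
    u n ≤ C * K ^ n := h n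
    _ ≤ max 1 C ^ n * K ^ n := by gcongr
    _ = (max 1 C * K) ^ n := (mul_pow ..).symm
  calc u n ^ ((n : ℝ)⁻¹) ≤ ((max 1 C * K) ^ n) ^ ((n : ℝ)⁻¹) :=
        Real.rpow_le_rpow (hu n) hle (by positivity)
    _ = max 1 C * K := Real.pow_rpow_inv_natCast (by positivity) hn

theorem eventually_le_pow_of_limsup_rpow_inv_lt {ε : ℝ} (hu : ∀ n, 0 ≤ u n)
    (hbdd : IsBoundedUnder (· ≤ ·) atTop fun n => u n ^ ((n : ℝ)⁻¹))
    (h : limsup (fun n => u n ^ ((n : ℝ)⁻¹)) atTop < ε) : ∀ᶠ n in atTop, u n ≤ ε ^ n := by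
  filter_upwards [eventually_lt_of_limsup_lt h hbdd, eventually_ne_atTop 0] with n hlt hn
  calc u n = (u n ^ ((n : ℝ)⁻¹)) ^ n := (Real.rpow_inv_natCast_pow (hu n) hn).symm
    _ ≤ ε ^ n := pow_le_pow_left₀ (Real.rpow_nonneg (hu n) _) hlt.le n

theorem exists_forall_le_mul_pow_of_eventually_le {ε : ℝ} (hε : 0 < ε)
    (h : ∀ᶠ n in atTop, u n ≤ ε ^ n) : ∃ M, ∀ n, u n ≤ M * ε ^ n := by
  have hbdd : IsBoundedUnder (· ≤ ·) atTop fun n => u n / ε ^ n :=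
    isBoundedUnder_of_eventually_le (a := 1)
      (h.mono fun _ hn => div_le_one_of_le₀ hn (by positivity))
  obtain ⟨M, hM⟩ := hbdd.bddAbove_range
  exact ⟨M, fun n => (div_le_iff₀ (by positivity)).1 (hM ⟨n, rfl⟩)⟩

end Sequences

section Citer

theorem citer_succ {A : Type*} [Ring A] (a b : A) (n : ℕ) :
    citer a b (n + 1) = a * citer a b n - citer a b n * b :=
  Function.iterate_succ_apply' _ _ _

variable {A : Type*} [NormedRing A]

theorem norm_citer_le (a b : A) (n : ℕ) : ‖citer a b n‖ ≤ ‖(1 : A)‖ * (‖a‖ + ‖b‖) ^ n := by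
  induction n with
  | zero => simp [citer]
  | succ n ih =>
    calc ‖citer a b (n + 1)‖ ≤ ‖a‖ * ‖citer a b n‖ + ‖citer a b n‖ * ‖b‖ := by
          rw [citer_succ]
          exact (norm_sub_le _ _).trans (add_le_add (norm_mul_le _ _) (norm_mul_le _ _))
      _ = (‖a‖ + ‖b‖) * ‖citer a b n‖ := by ring
      _ ≤ (‖a‖ + ‖b‖) * (‖(1 : A)‖ * (‖a‖ + ‖b‖) ^ n) := by gcongr
      _ = ‖(1 : A)‖ * (‖a‖ + ‖b‖) ^ (n + 1) := by ring

theorem eventually_norm_citer_le_pow {a b : A} (h : rho a b = 0) {ε : ℝ} (hε : 0 < ε) :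
    ∀ᶠ n in atTop, ‖citer a b n‖ ≤ ε ^ n :=
  eventually_le_pow_of_limsup_rpow_inv_lt (fun _ => norm_nonneg _)
    (isBoundedUnder_rpow_inv_of_le_mul_pow (fun _ => norm_nonneg _) (by positivity)
      (norm_citer_le a b))
    (h.trans_lt hε)

end Citer

section ZeroExpType

variable {E : Type*} [NormedAddCommGroup E] {f : ℂ → E} {C : ℝ}

def HasZeroExpType (f : ℂ → E) : Prop :=
  ∀ ε > 0, ∃ M, ∀ z, ‖f z‖ ≤ M * Real.exp (ε * ‖z‖)

theorem HasZeroExpType.comp_neg (hf : HasZeroExpType f) : HasZeroExpType fun z => f (-z) :=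
  fun ε hε => (hf ε hε).imp fun M hM z => by simpa using hM (-z)

variable [NormedSpace ℂ E]

theorem HasZeroExpType.norm_le_of_re_nonneg (hd : Differentiable ℂ f) (hf : HasZeroExpType f)
    (him : ∀ y : ℝ, ‖f (y * I)‖ ≤ C) {z : ℂ} (hz : 0 ≤ z.re) : ‖f z‖ ≤ C := by
  -- Damping by `exp (-ε z)` makes `f` bounded on the positive real axis; then let `ε → 0`.
  suffices ∀ ε > (0 : ℝ), ‖f z‖ ≤ Real.exp (ε * z.re) * C by
    refine ge_of_tendsto ?_ (eventually_nhdsWithin_of_forall (a := 0) (s := Set.Ioi 0) this)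
    exact (Continuous.tendsto' (by fun_prop) _ _ (by simp)).mono_left nhdsWithin_le_nhds
  intro ε hε
  obtain ⟨M, hM⟩ := hf ε hε
  set g : ℂ → E := fun w => cexp (-(ε * w)) • f w
  have hgn : ∀ w, ‖g w‖ = Real.exp (-(ε * w.re)) * ‖f w‖ := fun w => by
    simp [g, norm_smul, Complex.norm_exp]
  have hg : ‖g z‖ ≤ C := by
    refine PhragmenLindelof.right_half_plane_of_bounded_on_real
      ((differentiable_id.const_mul _).neg.cexp.smul hd).diffContOnCl
      ⟨1, one_lt_two, 2 * ε, .of_bound M (.of_forall fun w => ?_)⟩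
      (isBoundedUnder_of_eventually_le (a := M) ?_) (fun y => ?_) hz
    · have hre : -(ε * w.re) ≤ ε * ‖w‖ := by
        have := (neg_le_abs w.re).trans (abs_re_le_norm w)
        nlinarith
      rw [hgn, Real.norm_eq_abs, Real.abs_exp, Real.rpow_one]
      calc Real.exp (-(ε * w.re)) * ‖f w‖ ≤ Real.exp (ε * ‖w‖) * (M * Real.exp (ε * ‖w‖)) :=
            mul_le_mul (Real.exp_le_exp.2 hre) (hM w) (norm_nonneg _) (Real.exp_pos _).le
        _ = M * Real.exp (2 * ε * ‖w‖) := by rw [mul_assoc 2, two_mul, Real.exp_add]; ring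
    · filter_upwards [eventually_ge_atTop 0] with x hx
      calc ‖g x‖ ≤ Real.exp (-(ε * x)) * (M * Real.exp (ε * x)) := by
            rw [hgn, ofReal_re]
            gcongr
            simpa [abs_of_nonneg hx] using hM x
        _ = M := by rw [mul_left_comm, ← Real.exp_add, neg_add_cancel, Real.exp_zero, mul_one]
    · simpa [hgn] using him y
  rw [hgn, Real.exp_neg, inv_mul_le_iff₀ (Real.exp_pos _)] at hg
  exact hg

theorem HasZeroExpType.norm_le (hd : Differentiable ℂ f) (hf : HasZeroExpType f)
    (him : ∀ y : ℝ, ‖f (y * I)‖ ≤ C) (z : ℂ) : ‖f z‖ ≤ C := by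
  rcases le_total 0 z.re with hz | hz
  · exact hf.norm_le_of_re_nonneg hd him hz
  · have him' : ∀ y : ℝ, ‖f (-(y * I))‖ ≤ C := fun y => by
      simpa [neg_mul] using him (-y)
    simpa using hf.comp_neg.norm_le_of_re_nonneg (hd.comp differentiable_neg) him'
      (z := -z) (by simpa using hz)

theorem Differentiable.apply_eq_apply_of_hasZeroExpType (hd : Differentiable ℂ f)
    (hf : HasZeroExpType f) (him : ∀ y : ℝ, ‖f (y * I)‖ ≤ C) (z w : ℂ) : f z = f w :=
  hd.apply_eq_apply_of_bounded
    (isBounded_iff_forall_norm_le.2 ⟨C, by rintro _ ⟨z, rfl⟩; exact hf.norm_le hd him z⟩) z w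

end ZeroExpType

section Exponential

variable {A : Type*} [NormedRing A] [NormedAlgebra ℂ A]

noncomputable def mulLeftRingHom : A →+* (A →L[ℂ] A) where
  toFun := ContinuousLinearMap.mul ℂ A
  map_one' := by ext; simp
  map_mul' _ _ := by ext; simp [mul_assoc]
  map_zero' := by ext; simp
  map_add' _ _ := by ext; simp

noncomputable def mulRightRingHom : Aᵐᵒᵖ →+* (A →L[ℂ] A) where
  toFun b := (ContinuousLinearMap.mul ℂ A).flip b.unop
  map_one' := by ext; simp
  map_mul' _ _ := by ext; simp [mul_assoc]
  map_zero' := by ext; simp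
  map_add' _ _ := by ext; simp

@[simp]
theorem mulLeftRingHom_apply (a x : A) : mulLeftRingHom a x = a * x := rfl

@[simp]
theorem mulRightRingHom_apply (b : Aᵐᵒᵖ) (x : A) : mulRightRingHom b x = x * b.unop := rfl

theorem continuous_mulLeftRingHom : Continuous (mulLeftRingHom (A := A)) :=
  (ContinuousLinearMap.mul ℂ A).continuous

theorem continuous_mulRightRingHom : Continuous (mulRightRingHom (A := A)) :=
  (ContinuousLinearMap.mul ℂ A).flip.continuous.comp MulOpposite.continuous_unop

noncomputable def commutatorCLM (a b : A) : A →L[ℂ] A :=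
  mulLeftRingHom a - mulRightRingHom (MulOpposite.op b)

theorem smul_commutatorCLM_pow_apply_one (a b : A) (z : ℂ) (n : ℕ) :
    ((z • commutatorCLM a b) ^ n) 1 = z ^ n • citer a b n := by
  induction n with
  | zero => simp [citer]
  | succ n ih =>
    rw [pow_succ', mul_apply_eq_comp, ih, citer_succ]
    simp [commutatorCLM, pow_succ, mul_smul, smul_sub]

variable [CompleteSpace A]

theorem exp_smul_commutatorCLM_apply_one (a b : A) (z : ℂ) :
    exp (z • commutatorCLM a b) 1 = exp (z • a) * exp (-(z • b)) := by
  let _ : NormedAlgebra ℚ A := .restrictScalars ℚ ℂ A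
  let _ : NormedAlgebra ℚ (A →L[ℂ] A) := .restrictScalars ℚ ℂ (A →L[ℂ] A)
  have hsplit : z • commutatorCLM a b
      = mulLeftRingHom (z • a) + mulRightRingHom (MulOpposite.op (-(z • b))) := by
    ext x
    simp [commutatorCLM, sub_eq_add_neg]
  have hcomm : Commute (mulLeftRingHom (z • a)) (mulRightRingHom (MulOpposite.op (-(z • b)))) := by
    ext x
    simp [mul_assoc]
  rw [hsplit, exp_add_of_commute hcomm, ← map_exp _ continuous_mulLeftRingHom,
    ← map_exp _ continuous_mulRightRingHom, exp_op]
  simp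

theorem hasSum_smul_citer (a b : A) (z : ℂ) :
    HasSum (fun n => ((n ! : ℂ)⁻¹ * z ^ n) • citer a b n) (exp (z • a) * exp (-(z • b))) := by
  rw [← exp_smul_commutatorCLM_apply_one]
  refine ((exp_series_hasSum_exp' (𝕂 := ℂ) (z • commutatorCLM a b)).mapL
    (ContinuousLinearMap.apply ℂ A 1)).congr_fun fun n => ?_
  rw [ContinuousLinearMap.apply_apply, smul_apply, smul_commutatorCLM_pow_apply_one, mul_smul]

theorem norm_exp_smul_mul_exp_neg_smul_le {a b : A} {M ε : ℝ} (hM : ∀ n, ‖citer a b n‖ ≤ M * ε ^ n)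
    (z : ℂ) : ‖exp (z • a) * exp (-(z • b))‖ ≤ M * Real.exp (ε * ‖z‖) := by
  refine (hasSum_smul_citer a b z).norm_le_of_bounded
    ((Real.exp_eq_exp_ℝ ▸ expSeries_div_hasSum_exp (ε * ‖z‖)).mul_left M) fun n => ?_
  calc ‖((n ! : ℂ)⁻¹ * z ^ n) • citer a b n‖ = (n ! : ℝ)⁻¹ * ‖z‖ ^ n * ‖citer a b n‖ := by
        simp [norm_smul]
    _ ≤ (n ! : ℝ)⁻¹ * ‖z‖ ^ n * (M * ε ^ n) := by gcongr; exact hM n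
    _ = M * ((ε * ‖z‖) ^ n / n !) := by ring

theorem hasZeroExpType_of_rho_eq_zero {a b : A} (h : rho a b = 0) :
    HasZeroExpType fun z : ℂ => exp (z • a) * exp (-(z • b)) := fun _ hε =>
  (exists_forall_le_mul_pow_of_eventually_le hε (eventually_norm_citer_le_pow h hε)).imp
    fun _ hM => norm_exp_smul_mul_exp_neg_smul_le hM

theorem hasDerivAt_exp_smul_mul_exp_neg_smul (a b : A) (t : ℂ) :
    HasDerivAt (fun z : ℂ => exp (z • a) * exp (-(z • b)))
      (exp (t • a) * a * exp (-(t • b)) - exp (t • a) * (exp (-(t • b)) * b)) t := by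
  convert (hasDerivAt_exp_smul_const a t).mul (hasDerivAt_exp_smul_const (-b) t) using 1
  · funext z
    simp only [Pi.mul_apply, smul_neg]
  · simp only [smul_neg, mul_neg, sub_eq_add_neg]

end Exponential

theorem norm_exp_smul_mul_exp_neg_smul_le_one {A : Type*} [NormedRing A] [StarRing A]
    [CStarRing A] [CompleteSpace A] [NormedAlgebra ℂ A] [StarModule ℂ A] [Nontrivial A] {a b : A}
    (ha : IsSelfAdjoint a) (hb : IsSelfAdjoint b) (y : ℝ) :
    ‖exp (((y : ℂ) * I) • a) * exp (-(((y : ℂ) * I) • b))‖ ≤ 1 := by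
  let _ : NormedAlgebra ℚ A := .restrictScalars ℚ ℂ A
  have hyI : (y : ℂ) * I ∈ skewAdjoint ℂ := by simp [skewAdjoint.mem_iff]
  have hu := exp_mem_unitary_of_mem_skewAdjoint (ha.smul_mem_skewAdjoint hyI)
  have hv := exp_mem_unitary_of_mem_skewAdjoint (neg_mem (hb.smul_mem_skewAdjoint hyI))
  rw [CStarRing.norm_mem_unitary_mul _ hu, CStarRing.norm_of_mem_unitary hv]

/-- Self-adjoint elements of a C*-algebra with ρ(a,b) = 0 are equal. -/
theorem stmt_10 {A : Type*} [NormedRing A] [StarRing A] [CStarRing A] [CompleteSpace A]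
    [NormedAlgebra ℂ A] [StarModule ℂ A]
    (a b : A) (ha : IsSelfAdjoint a) (hb : IsSelfAdjoint b) (h : rho a b = 0) :
    a = b := by
  rcases subsingleton_or_nontrivial A with hA | hA
  · exact Subsingleton.elim a b
  set f : ℂ → A := fun z => exp (z • a) * exp (-(z • b))
  have hd : Differentiable ℂ f := fun t =>
    (hasDerivAt_exp_smul_mul_exp_neg_smul a b t).differentiableAt
  have hconst : f = fun _ => f 0 := funext fun z =>
    hd.apply_eq_apply_of_hasZeroExpType (hasZeroExpType_of_rho_eq_zero h)
      (norm_exp_smul_mul_exp_neg_smul_le_one ha hb) z 0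
  have hderiv : HasDerivAt f (a - b) 0 := by
    simpa using hasDerivAt_exp_smul_mul_exp_neg_smul a b 0
  rw [hconst] at hderiv
  exact sub_eq_zero.1 ((hasDerivAt_const 0 (f 0)).unique hderiv).symm
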